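/- Let (Xₙ) be simple random walk on ℤ started at 0 and Mₙ = max_{k≤n} X_k. Then for every ε ∈ (0, 1/2), almost surely Mₙ ≥ n^{1/2−ε} for all but finitely many n. -/

import Mathlib

/-!
Reflecting a `±1` path after its first visit to `x ≥ 0` maps the paths that end above `x`
injectively to the paths that visit `x` and end below it. Together with the symmetry `s ↦ -s`
this shows that at most as many paths of length `n` stay below `x` as end in `[-x, x]`, and
those number at most `(2x + 1) * choose n (n / 2) ≤ (2x + 1) * 2 ^ n * √(2 / (n + 1))`.
Hence `P(Mₙ < x) = O(x / √n)`. Along `n = 4 ^ j` with `x = 4 ^ ((j + 1) * (1/2 - ε))` these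
probabilities are summable, so by Borel–Cantelli eventually `M_{4^j} ≥ x`, and this dominates
`n ^ (1/2 - ε)` for `4 ^ j ≤ n < 4 ^ (j + 1)`.
-/

open Finset
open scoped symmDiff

theorem exists_eq_of_le_of_succ_le_add_one {f : ℕ → ℤ} (hf : ∀ k, f (k + 1) ≤ f k + 1)
    {x : ℤ} {n : ℕ} (h0 : f 0 ≤ x) (hn : x ≤ f n) : ∃ k ≤ n, f k = x := by
  induction n with
  | zero => exact ⟨0, le_rfl, le_antisymm h0 hn⟩
  | succ m ih =>
    by_cases hm : x ≤ f m
    · obtain ⟨k, hk, rfl⟩ := ih hm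
      exact ⟨k, hk.trans m.le_succ, rfl⟩
    · exact ⟨m + 1, le_rfl, by linarith [hf m]⟩

theorem Nat.succ_mul_centralBinom_sq_le (m : ℕ) : (m + 1) * m.centralBinom ^ 2 ≤ 16 ^ m := by
  induction m with
  | zero => simp
  | succ m ih =>
    have hrec := Nat.succ_mul_centralBinom_succ m
    have hpoly : (m + 2) * (2 * (2 * m + 1)) ^ 2 ≤ 16 * (m + 1) ^ 3 := by nlinarith
    refine Nat.le_of_mul_le_mul_left ?_ (show 0 < (m + 1) ^ 2 by positivity)
    calc (m + 1) ^ 2 * ((m + 1 + 1) * (m + 1).centralBinom ^ 2)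
        = (m + 2) * ((m + 1) * (m + 1).centralBinom) ^ 2 := by ring
      _ = (m + 2) * (2 * (2 * m + 1)) ^ 2 * m.centralBinom ^ 2 := by rw [hrec]; ring
      _ ≤ 16 * (m + 1) ^ 3 * m.centralBinom ^ 2 := Nat.mul_le_mul_right _ hpoly
      _ = 16 * (m + 1) ^ 2 * ((m + 1) * m.centralBinom ^ 2) := by ring
      _ ≤ 16 * (m + 1) ^ 2 * 16 ^ m := Nat.mul_le_mul_left _ ih
      _ = (m + 1) ^ 2 * 16 ^ (m + 1) := by ring

theorem Nat.succ_mul_choose_half_sq_le (n : ℕ) :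
    (n + 1) * n.choose (n / 2) ^ 2 ≤ 2 * 4 ^ n := by
  obtain ⟨m, rfl | rfl⟩ := Nat.even_or_odd' n
  · have := Nat.succ_mul_centralBinom_sq_le m
    rw [show 2 * m / 2 = m by omega, ← Nat.centralBinom_eq_two_mul_choose, pow_mul]
    norm_num
    nlinarith
  · have hhalf : (m + 1).centralBinom = 2 * (2 * m + 1).choose m := by
      rw [Nat.centralBinom_eq_two_mul_choose, show 2 * (m + 1) = 2 * m + 1 + 1 by ring,
        Nat.choose_succ_succ', Nat.choose_symm_half]
      ring
    have := Nat.succ_mul_centralBinom_sq_le (m + 1)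
    have h16 : 4 ^ (2 * m + 1) = 4 * 16 ^ m := by rw [pow_succ, pow_mul]; ring
    rw [hhalf, pow_succ 16] at this
    rw [show (2 * m + 1) / 2 = m by omega, h16]
    nlinarith

theorem Nat.choose_half_div_two_pow_le (n : ℕ) :
    (n.choose (n / 2) : ℝ) / 2 ^ n ≤ √(2 / (n + 1)) := by
  rw [Real.le_sqrt (by positivity) (by positivity), div_pow, le_div_iff₀ (by positivity),
    div_mul_eq_mul_div, div_le_iff₀ (by positivity)]
  have : ((n + 1) * n.choose (n / 2) ^ 2 : ℝ) ≤ 2 * 4 ^ n := by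
    exact_mod_cast Nat.succ_mul_choose_half_sq_le n
  calc (n.choose (n / 2) : ℝ) ^ 2 * (n + 1) ≤ 2 * 4 ^ n := by linarith
    _ = 2 * (2 ^ n) ^ 2 := by rw [← pow_mul, mul_comm n, pow_mul]; norm_num

namespace UpStepPath

variable {n : ℕ}

/-- A path of `n` steps `±1` is encoded by the set of its up-steps; `step s i = 0` for
`i ≥ n`. -/
def step (s : Finset (Fin n)) (i : ℕ) : ℤ :=
  if h : i < n then (if ⟨i, h⟩ ∈ s then 1 else -1) else 0

def walk (s : Finset (Fin n)) (k : ℕ) : ℤ := ∑ i ∈ range k, step s i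

@[simp] lemma walk_zero (s : Finset (Fin n)) : walk s 0 = 0 := by simp [walk]

lemma walk_succ (s : Finset (Fin n)) (k : ℕ) : walk s (k + 1) = walk s k + step s k :=
  sum_range_succ _ _

lemma step_le_one (s : Finset (Fin n)) (i : ℕ) : step s i ≤ 1 := by
  unfold step; split_ifs <;> simp

lemma step_compl (s : Finset (Fin n)) (i : ℕ) : step sᶜ i = -step s i := by
  unfold step; split_ifs <;> simp_all

lemma walk_compl (s : Finset (Fin n)) (k : ℕ) : walk sᶜ k = -walk s k := by
  simp [walk, step_compl]

lemma walk_eq_two_mul_card_sub (s : Finset (Fin n)) : walk s n = 2 * #s - n := by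
  have : walk s n = ∑ i : Fin n, if i ∈ s then (1 : ℤ) else -1 := by
    rw [walk, ← Fin.sum_univ_eq_sum_range]
    simp [step]
  rw [this, sum_ite, sum_const, sum_const, filter_mem_eq_inter, univ_inter]
  have := card_filter_add_card_filter_not (s := (univ : Finset (Fin n))) (· ∈ s)
  simp_all
  omega

lemma exists_walk_eq {s : Finset (Fin n)} {x : ℤ} (hx : 0 ≤ x) (hxn : x ≤ walk s n) :
    ∃ k ≤ n, walk s k = x :=
  exists_eq_of_le_of_succ_le_add_one (fun k => by rw [walk_succ]; linarith [step_le_one s k])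
    (by simpa using hx) hxn

lemma card_walk_eq_le_choose (k : ℤ) :
    #{s : Finset (Fin n) | walk s n = k} ≤ n.choose (n / 2) := by
  by_cases hk : ∃ t : ℕ, 2 * (t : ℤ) - n = k
  · obtain ⟨t, rfl⟩ := hk
    calc #{s : Finset (Fin n) | walk s n = 2 * t - n}
        = #{s : Finset (Fin n) | #s = t} := by
          congr 1; ext s
          simp only [mem_filter, mem_univ, true_and, walk_eq_two_mul_card_sub]; omega
      _ = #(powersetCard t (univ : Finset (Fin n))) := by
          rw [powersetCard_eq_filter, powerset_univ]
      _ = n.choose t := by simp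
      _ ≤ n.choose (n / 2) := Nat.choose_le_middle t n
  · rw [filter_false_of_mem fun s _ hs => hk ⟨#s, by rw [← hs, walk_eq_two_mul_card_sub]⟩,
      card_empty]
    exact Nat.zero_le _

section Reflection

variable (x : ℤ)

open Classical in
noncomputable def hitTime (s : Finset (Fin n)) : ℕ :=
  if h : ∃ k, walk s k = x then Nat.find h else 0

variable {x}

lemma walk_hitTime {s : Finset (Fin n)} (h : ∃ k, walk s k = x) : walk s (hitTime x s) = x := by
  classical
  rw [hitTime, dif_pos h]
  exact Nat.find_spec h

lemma walk_ne_of_lt_hitTime {s : Finset (Fin n)} {k : ℕ} (hk : k < hitTime x s) :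
    walk s k ≠ x := by
  classical
  unfold hitTime at hk
  split_ifs at hk with h
  · exact Nat.find_min h hk
  · exact absurd hk (Nat.not_lt_zero k)

lemma hitTime_le {s : Finset (Fin n)} {k : ℕ} (hk : walk s k = x) : hitTime x s ≤ k :=
  not_lt.1 fun hlt => walk_ne_of_lt_hitTime hlt hk

variable (x) in
noncomputable def reflect (s : Finset (Fin n)) : Finset (Fin n) :=
  s ∆ univ.filter (hitTime x s ≤ ·.val)

lemma step_reflect (s : Finset (Fin n)) (i : ℕ) :
    step (reflect x s) i = if hitTime x s ≤ i then -step s i else step s i := by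
  unfold step reflect
  split_ifs <;> simp_all [mem_symmDiff]

lemma walk_reflect_of_le_hitTime {s : Finset (Fin n)} {k : ℕ} (hk : k ≤ hitTime x s) :
    walk (reflect x s) k = walk s k :=
  sum_congr rfl fun i hi => by
    rw [step_reflect, if_neg (by simp at hi; omega)]

lemma walk_reflect_of_hitTime_le {s : Finset (Fin n)} {k : ℕ} (hk : hitTime x s ≤ k) :
    walk (reflect x s) k = 2 * walk s (hitTime x s) - walk s k := by
  have hsplit (t : Finset (Fin n)) :
      walk t k = walk t (hitTime x s) + ∑ i ∈ Ico (hitTime x s) k, step t i :=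
    (sum_range_add_sum_Ico _ hk).symm
  have hflip : ∑ i ∈ Ico (hitTime x s) k, step (reflect x s) i =
      -∑ i ∈ Ico (hitTime x s) k, step s i := by
    rw [← sum_neg_distrib]
    exact sum_congr rfl fun i hi => by rw [step_reflect, if_pos (mem_Ico.1 hi).1]
  rw [hsplit, hsplit s, hflip, walk_reflect_of_le_hitTime le_rfl]
  ring

lemma hitTime_le_hitTime_of_reflect_eq {s t : Finset (Fin n)} (hs : ∃ k, walk s k = x)
    (h : reflect x s = reflect x t) : hitTime x t ≤ hitTime x s := by
  by_contra! hlt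
  have := walk_reflect_of_le_hitTime hlt.le (s := t)
  rw [← h, walk_reflect_of_le_hitTime le_rfl, walk_hitTime hs] at this
  exact walk_ne_of_lt_hitTime hlt this.symm

lemma reflect_injOn : Set.InjOn (reflect x) {s : Finset (Fin n) | ∃ k, walk s k = x} := by
  intro s hs t ht h
  have htime : hitTime x s = hitTime x t :=
    le_antisymm (hitTime_le_hitTime_of_reflect_eq ht h.symm) (hitTime_le_hitTime_of_reflect_eq hs h)
  unfold reflect at h
  rwa [htime, symmDiff_left_inj] at h

end Reflection

lemma card_lt_walk_le_card_hit_walk_lt {x : ℤ} (hx : 0 ≤ x) :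
    #{s : Finset (Fin n) | x < walk s n} ≤
      #{s : Finset (Fin n) | (∃ k ≤ n, x ≤ walk s k) ∧ walk s n < x} := by
  have hhit {s : Finset (Fin n)} (hs : s ∈ ({s | x < walk s n} : Finset _)) :
      ∃ k ≤ n, walk s k = x :=
    exists_walk_eq hx (mem_filter.1 hs).2.le
  refine card_le_card_of_injOn (reflect x) (fun s hs => ?_) fun s hs t ht h =>
    reflect_injOn ((hhit hs).imp fun _ => And.right) ((hhit ht).imp fun _ => And.right) h
  obtain ⟨k, hkn, hk⟩ := hhit hs
  have hτ : hitTime x s ≤ n := (hitTime_le hk).trans hkn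
  have hτx : walk s (hitTime x s) = x := walk_hitTime ⟨k, hk⟩
  simp only [coe_filter, mem_univ, true_and, Set.mem_ofPred_eq] at hs ⊢
  refine ⟨⟨hitTime x s, hτ, ?_⟩, ?_⟩
  · rw [walk_reflect_of_le_hitTime le_rfl, hτx]
  · rw [walk_reflect_of_hitTime_le hτ, hτx]
    linarith

lemma card_walk_lt_neg_eq_card_lt_walk (x : ℤ) :
    #{s : Finset (Fin n) | walk s n < -x} = #{s : Finset (Fin n) | x < walk s n} :=
  card_nbij' compl compl (fun s hs => by simp_all [walk_compl]; linarith)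
    (fun s hs => by simp_all [walk_compl]) (fun s _ => compl_compl s) (fun s _ => compl_compl s)

lemma card_forall_walk_lt_le_card_abs_walk_le {x : ℤ} (hx : 0 ≤ x) :
    #{s : Finset (Fin n) | ∀ k ≤ n, walk s k < x} ≤
      #{s : Finset (Fin n) | |walk s n| ≤ x} := by
  have hpart : #{s : Finset (Fin n) | walk s n < -x} + #{s : Finset (Fin n) | |walk s n| ≤ x} +
      #{s : Finset (Fin n) | x < walk s n} = 2 ^ n := by
    calc _ = ∑ _s : Finset (Fin n), 1 := by
          simp only [card_filter, ← sum_add_distrib]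
          exact sum_congr rfl fun s _ => by split_ifs <;> simp_all [abs_le] <;> omega
      _ = 2 ^ n := by simp
  have hsplit : #{s : Finset (Fin n) | ∀ k ≤ n, walk s k < x} +
      #{s : Finset (Fin n) | ∃ k ≤ n, x ≤ walk s k} = 2 ^ n := by
    rw [add_comm]
    convert card_filter_add_card_filter_not (s := univ)
      (fun s : Finset (Fin n) => ∃ k ≤ n, x ≤ walk s k) using 3 <;> simp
  have hreach : #{s : Finset (Fin n) | x < walk s n} +
      #{s : Finset (Fin n) | (∃ k ≤ n, x ≤ walk s k) ∧ walk s n < x} ≤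
        #{s : Finset (Fin n) | ∃ k ≤ n, x ≤ walk s k} := by
    rw [← card_union_of_disjoint (disjoint_filter.2 fun s _ hA hB => hB.2.not_gt hA)]
    refine card_le_card fun s hs => ?_
    simp only [mem_union, mem_filter, mem_univ, true_and] at hs ⊢
    exact hs.elim (fun hA => ⟨n, le_rfl, hA.le⟩) And.left
  -- `#{stay below x} = 2 ^ n - #{reach x} ≤ 2 ^ n - 2 * #{end above x} = #{end in [-x, x]}`
  have := card_lt_walk_le_card_hit_walk_lt (n := n) hx
  rw [card_walk_lt_neg_eq_card_lt_walk] at hpart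
  omega

lemma card_abs_walk_le {x : ℤ} (hx : 0 ≤ x) :
    (#{s : Finset (Fin n) | |walk s n| ≤ x} : ℤ) ≤ (2 * x + 1) * n.choose (n / 2) := by
  rw [card_eq_sum_card_fiberwise (f := (walk · n)) (t := Icc (-x) x)
    fun s hs => mem_Icc.2 (abs_le.1 (mem_filter.1 hs).2)]
  calc ((∑ k ∈ Icc (-x) x,
          #{s ∈ ({s | |walk s n| ≤ x} : Finset _) | walk s n = k} : ℕ) : ℤ)
      ≤ ((#(Icc (-x) x) * n.choose (n / 2) : ℕ) : ℤ) := by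
        refine Nat.cast_le.2 (sum_le_card_nsmul _ _ _ fun k _ => ?_)
        exact (card_le_card (filter_subset_filter _ (filter_subset _ _))).trans
          (card_walk_eq_le_choose k)
    _ = (2 * x + 1) * n.choose (n / 2) := by
        rw [Nat.cast_mul, Int.card_Icc, Int.toNat_of_nonneg (by omega)]
        ring

lemma card_forall_walk_lt_div_le {x : ℤ} (hx : 0 ≤ x) :
    (#{s : Finset (Fin n) | ∀ k ≤ n, walk s k < x} : ℝ) / 2 ^ n ≤
      (2 * x + 1) * √(2 / (n + 1)) := by
  have hcard : (#{s : Finset (Fin n) | ∀ k ≤ n, walk s k < x} : ℝ) ≤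
      (2 * x + 1) * n.choose (n / 2) := by
    exact_mod_cast (Nat.cast_le.2 (card_forall_walk_lt_le_card_abs_walk_le hx)).trans
      (card_abs_walk_le hx)
  calc (#{s : Finset (Fin n) | ∀ k ≤ n, walk s k < x} : ℝ) / 2 ^ n
      ≤ (2 * x + 1) * (n.choose (n / 2) / 2 ^ n) := by
        rw [← mul_div_assoc]; gcongr
    _ ≤ (2 * x + 1) * √(2 / (n + 1)) := by
        gcongr
        exact_mod_cast Nat.choose_half_div_two_pow_le n

section Probability

open MeasureTheory ProbabilityTheory

variable {Ω : Type*} {ζ : ℕ → Ω → ℤ}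

def upSteps (ζ : ℕ → Ω → ℤ) (n : ℕ) (ω : Ω) : Finset (Fin n) := {i | ζ i ω = 1}

lemma walk_upSteps {ω : Ω} (hω : ∀ i, ζ i ω = 1 ∨ ζ i ω = -1) {k : ℕ} (hk : k ≤ n) :
    walk (upSteps ζ n ω) k = ∑ i ∈ range k, ζ i ω := by
  refine sum_congr rfl fun i hi => ?_
  have hin : i < n := (mem_range.1 hi).trans_le hk
  rcases hω i with h | h <;> simp [step, upSteps, hin, h]

variable [MeasurableSpace Ω] {P : Measure Ω}

lemma measure_upSteps_eq [IsProbabilityMeasure P] (hmeas : ∀ i, Measurable (ζ i))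
    (hiid : iIndepFun ζ P) (h1 : ∀ i, P {ω | ζ i ω = 1} = 1 / 2) (s : Finset (Fin n)) :
    P {ω | upSteps ζ n ω = s} = 2⁻¹ ^ n := by
  let A (i : Fin n) : Set ℤ := if i ∈ s then {1} else {1}ᶜ
  have hset : {ω | upSteps ζ n ω = s} = ⋂ i ∈ (univ : Finset (Fin n)), ζ i ⁻¹' A i := by
    ext ω
    simp only [upSteps, Finset.ext_iff, mem_filter, mem_univ, true_and, Set.mem_ofPred_eq,
      Set.mem_iInter, Set.mem_preimage, A]
    refine forall_congr' fun i => ?_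
    split_ifs <;> simp [*]
  have hA (i : Fin n) : P (ζ i ⁻¹' A i) = 2⁻¹ := by
    have hi : P (ζ i ⁻¹' {1}) = 2⁻¹ := by rw [← one_div]; exact h1 i
    unfold A
    split_ifs
    · exact hi
    · rw [Set.preimage_compl, prob_compl_eq_one_sub (hmeas i (measurableSet_singleton 1)), hi,
        ENNReal.one_sub_inv_two]
  rw [hset, (hiid.precomp Fin.val_injective).measure_inter_preimage_eq_mul _
    fun i _ => by unfold A; split_ifs <;> simp, prod_congr rfl fun i _ => hA i, prod_const,
    card_univ, Fintype.card_fin]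

lemma ae_eq_one_or_eq_neg_one [IsProbabilityMeasure P] (hmeas : ∀ i, Measurable (ζ i))
    (h1 : ∀ i, P {ω | ζ i ω = 1} = 1 / 2) (h2 : ∀ i, P {ω | ζ i ω = -1} = 1 / 2) :
    ∀ᵐ ω ∂P, ∀ i, ζ i ω = 1 ∨ ζ i ω = -1 := by
  refine ae_all_iff.2 fun i => ?_
  have hmeas1 : MeasurableSet {ω | ζ i ω = -1} := hmeas i (measurableSet_singleton _)
  have hdisj : Disjoint {ω | ζ i ω = 1} {ω | ζ i ω = -1} :=
    Set.disjoint_left.2 fun ω h h' => by simp_all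
  have hunion : P ({ω | ζ i ω = 1} ∪ {ω | ζ i ω = -1}) = P Set.univ := by
    rw [measure_union hdisj hmeas1, h1, h2, ENNReal.add_halves, measure_univ]
  exact (ae_iff_measure_eq
    ((hmeas i (measurableSet_singleton _)).union hmeas1).nullMeasurableSet).2 hunion

lemma measure_upSteps_mem_le [IsProbabilityMeasure P] (hmeas : ∀ i, Measurable (ζ i))
    (hiid : iIndepFun ζ P) (h1 : ∀ i, P {ω | ζ i ω = 1} = 1 / 2)
    (S : Finset (Finset (Fin n))) :
    P {ω | upSteps ζ n ω ∈ S} ≤ #S * 2⁻¹ ^ n := by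
  calc P {ω | upSteps ζ n ω ∈ S} = P (⋃ s ∈ S, {ω | upSteps ζ n ω = s}) := by
        congr 1; ext ω; simp
    _ ≤ ∑ s ∈ S, P {ω | upSteps ζ n ω = s} := measure_biUnion_finset_le _ _
    _ = #S * 2⁻¹ ^ n := by simp [measure_upSteps_eq hmeas hiid h1]

lemma measure_forall_partialSum_lt_le [IsProbabilityMeasure P] (hmeas : ∀ i, Measurable (ζ i))
    (hiid : iIndepFun ζ P) (h1 : ∀ i, P {ω | ζ i ω = 1} = 1 / 2)
    (h2 : ∀ i, P {ω | ζ i ω = -1} = 1 / 2) (n : ℕ) {y : ℝ} (hy : 0 ≤ y) :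
    P {ω | ∀ k ≤ n, ((∑ i ∈ range k, ζ i ω : ℤ) : ℝ) < y} ≤
      ENNReal.ofReal ((2 * y + 3) * √(2 / (n + 1))) := by
  set S : Finset (Finset (Fin n)) := {s | ∀ k ≤ n, walk s k < ⌈y⌉}
  have hsub : {ω | ∀ k ≤ n, ((∑ i ∈ range k, ζ i ω : ℤ) : ℝ) < y} ≤ᵐ[P]
      {ω | upSteps ζ n ω ∈ S} := by
    filter_upwards [ae_eq_one_or_eq_neg_one hmeas h1 h2] with ω hω hlt
    refine mem_filter.2 ⟨mem_univ _, fun k hk => ?_⟩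
    rw [walk_upSteps hω hk, Int.lt_ceil]
    exact hlt k hk
  have hceil : (2 * ⌈y⌉ + 1 : ℝ) ≤ 2 * y + 3 := by linarith [Int.ceil_lt_add_one y]
  calc P {ω | ∀ k ≤ n, ((∑ i ∈ range k, ζ i ω : ℤ) : ℝ) < y}
      ≤ #S * 2⁻¹ ^ n := (measure_mono_ae hsub).trans (measure_upSteps_mem_le hmeas hiid h1 S)
    _ = ENNReal.ofReal (#S / 2 ^ n) := by
        rw [ENNReal.ofReal_div_of_pos (by positivity)]
        simp [div_eq_mul_inv, ENNReal.inv_pow]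
    _ ≤ ENNReal.ofReal ((2 * y + 3) * √(2 / (n + 1))) := by
        refine ENNReal.ofReal_le_ofReal ((card_forall_walk_lt_div_le (Int.ceil_nonneg hy)).trans ?_)
        gcongr

end Probability

end UpStepPath

lemma sqrt_two_div_four_pow_add_one_le (j : ℕ) : √(2 / (4 ^ j + 1)) ≤ √2 / 2 ^ j := by
  have h4 : √((4 : ℝ) ^ j) = 2 ^ j := by
    rw [show (4 : ℝ) ^ j = (2 ^ j) ^ 2 by rw [← pow_mul, mul_comm, pow_mul]; norm_num]
    exact Real.sqrt_sq (by positivity)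
  calc √(2 / (4 ^ j + 1)) ≤ √(2 / 4 ^ j) := by gcongr; linarith
    _ = √2 / 2 ^ j := by rw [Real.sqrt_div' _ (by positivity), h4]

lemma summable_mul_sqrt_two_div_four_pow_add_one {a : ℝ} (ha0 : 0 ≤ a) (ha : a < 2)
    (b c : ℝ) :
    Summable fun j : ℕ => (b * a ^ j + c) * √(2 / (4 ^ j + 1)) := by
  have hgeom_a := summable_geometric_of_lt_one (by positivity) (by linarith : a / 2 < 1)
  have hgeom_half := summable_geometric_of_lt_one (by norm_num) (by norm_num : (1 / 2 : ℝ) < 1)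
  refine Summable.of_norm_bounded
    ((hgeom_a.mul_left (√2 * |b|)).add (hgeom_half.mul_left (√2 * |c|))) fun j => ?_
  have habs : |b * a ^ j + c| ≤ |b| * a ^ j + |c| := by
    calc |b * a ^ j + c| ≤ |b * a ^ j| + |c| := abs_add_le _ _
      _ = |b| * a ^ j + |c| := by rw [abs_mul, abs_of_nonneg (pow_nonneg ha0 j)]
  rw [Real.norm_eq_abs, abs_mul, abs_of_nonneg (Real.sqrt_nonneg _)]
  calc |b * a ^ j + c| * √(2 / (4 ^ j + 1)) ≤ (|b| * a ^ j + |c|) * (√2 / 2 ^ j) :=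
        mul_le_mul habs (sqrt_two_div_four_pow_add_one_le j) (by positivity) (by positivity)
    _ = √2 * |b| * (a / 2) ^ j + √2 * |c| * (1 / 2) ^ j := by
        simp only [div_pow, one_pow]; ring

lemma four_rpow_lt_two {q : ℝ} (hq : q < 1 / 2) : (4 : ℝ) ^ q < 2 := by
  calc (4 : ℝ) ^ q < 4 ^ (1 / 2 : ℝ) := Real.rpow_lt_rpow_of_exponent_lt (by norm_num) hq
    _ = 2 := by rw [show (4 : ℝ) = 2 ^ (2 : ℝ) by norm_num, ← Real.rpow_mul] <;> norm_num

lemma rpow_le_sup'_of_le {f : ℕ → ℤ} {q : ℝ} (hq : 0 ≤ q) {n j k : ℕ} (hkn : k ≤ n)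
    (hn : n < 4 ^ (j + 1)) (hk : ((4 : ℝ) ^ q) ^ (j + 1) ≤ f k) :
    (n : ℝ) ^ q ≤ ((range (n + 1)).sup' nonempty_range_add_one f : ℤ) := by
  calc (n : ℝ) ^ q ≤ ((4 : ℝ) ^ (j + 1)) ^ q := by gcongr; exact_mod_cast hn.le
    _ = ((4 : ℝ) ^ q) ^ (j + 1) := (Real.rpow_pow_comm (by norm_num) _ _).symm
    _ ≤ f k := hk
    _ ≤ _ := by exact_mod_cast le_sup' f (mem_range.2 (Nat.lt_succ_of_le hkn))

open MeasureTheory ProbabilityTheory Filter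

/-- For simple random walk on `ℤ` with running maximum `Mₙ`, for every `ε ∈ (0, 1/2)`,
almost surely `Mₙ ≥ n^{1/2-ε}` for all but finitely many `n`. -/
theorem srw_max_growth {Ω : Type*} [MeasurableSpace Ω] (P : Measure Ω)
    [IsProbabilityMeasure P] (ζ : ℕ → Ω → ℤ) (hmeas : ∀ i, Measurable (ζ i))
    (hiid : iIndepFun ζ P)
    (h1 : ∀ i, P {ω | ζ i ω = 1} = 1 / 2)
    (h2 : ∀ i, P {ω | ζ i ω = -1} = 1 / 2)
    (ε : ℝ) (hε : ε ∈ Set.Ioo (0 : ℝ) (1 / 2)) :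
    ∀ᵐ ω ∂P, ∀ᶠ n : ℕ in atTop,
      (n : ℝ) ^ ((1 : ℝ) / 2 - ε) ≤
        (((Finset.range (n + 1)).sup' Finset.nonempty_range_add_one
          fun k => ∑ i ∈ Finset.range k, ζ i ω : ℤ) : ℝ) := by
  obtain ⟨hε0, hε1⟩ := hε
  have hq : 0 ≤ 1 / 2 - ε := by linarith
  have ha : (4 : ℝ) ^ (1 / 2 - ε) < 2 := four_rpow_lt_two (by linarith)
  set q : ℝ := 1 / 2 - ε
  let E (j : ℕ) : Set Ω :=
    {ω | ∀ k ≤ 4 ^ j, ((∑ i ∈ range k, ζ i ω : ℤ) : ℝ) < ((4 : ℝ) ^ q) ^ (j + 1)}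
  have hE : ∑' j, P (E j) ≠ ⊤ := by
    refine ne_top_of_le_ne_top ?_ (ENNReal.tsum_le_tsum fun j =>
      UpStepPath.measure_forall_partialSum_lt_le hmeas hiid h1 h2 (4 ^ j) (by positivity))
    have hsum := summable_mul_sqrt_two_div_four_pow_add_one (by positivity) ha (2 * 4 ^ q) 3
    rw [← ENNReal.ofReal_tsum_of_nonneg (fun j => by positivity) (by
      convert hsum using 3 <;> push_cast <;> ring)]
    exact ENNReal.ofReal_ne_top
  filter_upwards [ae_eventually_notMem hE] with ω hω
  obtain ⟨J, hJ⟩ := eventually_atTop.1 hω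
  refine eventually_atTop.2 ⟨4 ^ J, fun n hn => ?_⟩
  have hn0 : n ≠ 0 := ((pow_pos (by norm_num : 0 < 4) J).trans_le hn).ne'
  obtain ⟨k, hk, hxk⟩ : ∃ k ≤ 4 ^ Nat.log 4 n,
      ((4 : ℝ) ^ q) ^ (Nat.log 4 n + 1) ≤ ((∑ i ∈ range k, ζ i ω : ℤ) : ℝ) := by
    simpa [E] using hJ _ (Nat.le_log_of_pow_le (by norm_num) hn)
  exact rpow_le_sup'_of_le hq (hk.trans (Nat.pow_log_le_self 4 hn0))
    (Nat.lt_pow_succ_log_self (by norm_num) n) hxk
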